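/- arXiv:2505.22909 — 6 statements merged into one kernel-verified Lean document; each statement's English description precedes it below -/
import Mathlib

section
/- Suppose σ₁* ∈ Σ₁ and v* ∈ ℝ^{[n]×S×Aⁿ} satisfy v* = V₁(σ₁*, σ₁*, v*) and v*_{i,s₁,p₀} = max_{σ₁^i ∈ Σ₁^i} V₁(σ₁*, σ₁^i, v*)_{i,s₁,p₀} for every (i,s₁,p₀). Then for every i and (s₁,p₀): (a) v*_{i,s₁,p₀} = Ṽ₁^i(s₁,p₀,σ₁^{i*}|σ₁^{-i*}); (b) max_{σ₁^i ∈ Σ₁^i} V₁(σ₁*, σ₁^i, v*)_{i,s₁,p₀} = sup_{σ₁^i ∈ Σ₁^i} Ṽ₁^i(s₁,p₀,σ₁^i|σ₁^{-i*}), and this supremum is attained at σ₁^{i*}; in particular σ₁* is a Nash equilibrium from time t = 1, i.e., Ṽ₁^i(s₁,p₀,σ₁^i|σ₁^{-i*}) ≤ Ṽ₁^i(s₁,p₀,σ₁^{i*}|σ₁^{-i*}) for every i, every (s₁,p₀) and every σ₁^i ∈ Σ₁^i. -/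
open Finset

/-- A one-memory policy for a single firm. -/
def IsPolicy {ι S A : Type*} [Fintype A]
    (τ : (ι → A) → S → A → ℝ) : Prop :=
  (∀ p₀ s₁ a, 0 ≤ τ p₀ s₁ a) ∧ ∀ p₀ s₁, ∑ a, τ p₀ s₁ a = 1

/-- A transition kernel on states. -/
def IsKernel {ι S A : Type*} [Fintype S]
    (P : (ι → A) → S → S → ℝ) : Prop :=
  (∀ p s s', 0 ≤ P p s s') ∧ ∀ p s, ∑ s', P p s s' = 1

/-- The one-step value operator `V₁`. -/
def V1 {ι S A : Type*} [Fintype ι] [DecidableEq ι] [Fintype S] [Fintype A]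
    (P : (ι → A) → S → S → ℝ) (π : ι → (ι → A) → S → ℝ) (δ : ι → ℝ)
    (σ : ι → (ι → A) → S → A → ℝ) (τ : (ι → A) → S → A → ℝ)
    (v : ι → S → (ι → A) → ℝ) (i : ι) (s₁ : S) (p₀ : ι → A) : ℝ :=
  ∑ p₁ : ι → A,
    (τ p₀ s₁ (p₁ i) * ∏ j ∈ Finset.univ.erase i, σ j p₀ s₁ (p₁ j)) *
      (π i p₁ s₁ + δ i * ∑ s₂, P p₁ s₁ s₂ * v i s₂ p₁)

/-- `W` solves the Bellman system of firm `i` under the one-memory profile `σ`. -/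
def IsBellman {ι S A : Type*} [Fintype ι] [DecidableEq ι] [Fintype S] [Fintype A]
    (P : (ι → A) → S → S → ℝ) (π : ι → (ι → A) → S → ℝ) (δ : ι → ℝ)
    (σ : ι → (ι → A) → S → A → ℝ) (i : ι) (W : S → (ι → A) → ℝ) : Prop :=
  ∀ s₁ p₀, W s₁ p₀ = ∑ p₁ : ι → A, (∏ j, σ j p₀ s₁ (p₁ j)) *
    (π i p₁ s₁ + δ i * ∑ s₂, P p₁ s₁ s₂ * W s₂ p₁)

/-- Contraction lemma: if `D` is pointwise dominated by `δ` times an average of its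
values (weights `w` and kernel `P` both stochastic), and `0 ≤ δ < 1`, then `D ≤ 0`. -/
lemma contraction_nonpos {ι S A : Type*} [Fintype ι] [DecidableEq ι] [Fintype S] [Fintype A]
    [Nonempty S] [Nonempty A] [Nonempty ι]
    (P : (ι → A) → S → S → ℝ) (hP : IsKernel P)
    (δi : ℝ) (hδ0 : 0 ≤ δi) (hδ1 : δi < 1)
    (w : (ι → A) → S → (ι → A) → ℝ)
    (hw0 : ∀ p₀ s₁ p₁, 0 ≤ w p₀ s₁ p₁) (hw1 : ∀ p₀ s₁, ∑ p₁, w p₀ s₁ p₁ = 1)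
    (D : S → (ι → A) → ℝ)
    (hD : ∀ s₁ p₀, D s₁ p₀ ≤ δi * ∑ p₁, w p₀ s₁ p₁ * ∑ s₂, P p₁ s₁ s₂ * D s₂ p₁) :
    ∀ s₁ p₀, D s₁ p₀ ≤ 0 := by
  have hne : (Finset.univ : Finset (S × (ι → A))).Nonempty := univ_nonempty
  set M : ℝ := Finset.univ.sup' hne (fun x : S × (ι → A) => D x.1 x.2) with hM
  have hle : ∀ s p, D s p ≤ M := fun s p =>
    Finset.le_sup' (fun x : S × (ι → A) => D x.1 x.2) (mem_univ (s, p))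
  have hstep : ∀ s₁ p₀, D s₁ p₀ ≤ δi * M := by
    intro s₁ p₀
    refine (hD s₁ p₀).trans (mul_le_mul_of_nonneg_left ?_ hδ0)
    calc ∑ p₁, w p₀ s₁ p₁ * ∑ s₂, P p₁ s₁ s₂ * D s₂ p₁
        ≤ ∑ p₁, w p₀ s₁ p₁ * M := by
          refine Finset.sum_le_sum fun p₁ _ => mul_le_mul_of_nonneg_left ?_ (hw0 _ _ _)
          calc ∑ s₂, P p₁ s₁ s₂ * D s₂ p₁ ≤ ∑ s₂, P p₁ s₁ s₂ * M :=
                Finset.sum_le_sum fun s₂ _ =>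
                  mul_le_mul_of_nonneg_left (hle _ _) (hP.1 _ _ _)
            _ = M := by rw [← Finset.sum_mul, hP.2, one_mul]
      _ = M := by rw [← Finset.sum_mul, hw1, one_mul]
  have hMle : M ≤ δi * M := by
    rw [hM]
    exact Finset.sup'_le _ _ fun x _ => hstep x.1 x.2
  have hM0 : M ≤ 0 := by nlinarith
  exact fun s p => (hle s p).trans hM0

/-- Main estimate: if `W` solves the Bellman system for firm `i` under the profile where
firm `i` deviates to `τ`, and the one-step value of `τ` against `v` is at most `v`,
then `W ≤ v i`. -/
lemma bellman_le {ι S A : Type*} [Fintype ι] [DecidableEq ι] [Nonempty ι]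
    [Fintype S] [Nonempty S] [Fintype A] [Nonempty A]
    (P : (ι → A) → S → S → ℝ) (hP : IsKernel P)
    (π : ι → (ι → A) → S → ℝ) (δ : ι → ℝ) (hδ : ∀ i, 0 < δ i ∧ δ i < 1)
    (σ : ι → (ι → A) → S → A → ℝ) (hσ : ∀ j, IsPolicy (σ j))
    (v : ι → S → (ι → A) → ℝ) (i : ι)
    (τ : (ι → A) → S → A → ℝ) (hτ : IsPolicy τ)
    (hVle : ∀ s₁ p₀, V1 P π δ σ τ v i s₁ p₀ ≤ v i s₁ p₀)
    (W : S → (ι → A) → ℝ)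
    (hW : ∀ s₁ p₀, W s₁ p₀ = ∑ p₁ : ι → A,
      (τ p₀ s₁ (p₁ i) * ∏ j ∈ Finset.univ.erase i, σ j p₀ s₁ (p₁ j)) *
        (π i p₁ s₁ + δ i * ∑ s₂, P p₁ s₁ s₂ * W s₂ p₁)) :
    ∀ s₁ p₀, W s₁ p₀ ≤ v i s₁ p₀ := by
  set w : (ι → A) → S → (ι → A) → ℝ :=
    fun p₀ s₁ p₁ => τ p₀ s₁ (p₁ i) * ∏ j ∈ Finset.univ.erase i, σ j p₀ s₁ (p₁ j) with hw
  have hw0 : ∀ p₀ s₁ p₁, 0 ≤ w p₀ s₁ p₁ := fun p₀ s₁ p₁ =>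
    mul_nonneg (hτ.1 _ _ _) (Finset.prod_nonneg fun j _ => (hσ j).1 _ _ _)
  have hw1 : ∀ p₀ s₁, ∑ p₁, w p₀ s₁ p₁ = 1 := by
    intro p₀ s₁
    have key : ∀ p₁ : ι → A,
        (∏ j, (Function.update σ i τ) j p₀ s₁ (p₁ j)) = w p₀ s₁ p₁ := by
      intro p₁
      rw [← Finset.mul_prod_erase Finset.univ _ (mem_univ i), Function.update_self]
      congr 1
      refine Finset.prod_congr rfl fun j hj => ?_
      rw [Function.update_of_ne (Finset.ne_of_mem_erase hj)]
    simp_rw [← key]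
    rw [← Fintype.prod_sum]
    refine Finset.prod_eq_one fun j _ => ?_
    by_cases hj : j = i
    · subst hj; rw [Function.update_self]; exact hτ.2 _ _
    · rw [Function.update_of_ne hj]; exact (hσ j).2 _ _
  have hD : ∀ s₁ p₀, W s₁ p₀ - v i s₁ p₀ ≤
      δ i * ∑ p₁, w p₀ s₁ p₁ * ∑ s₂, P p₁ s₁ s₂ * (W s₂ p₁ - v i s₂ p₁) := by
    intro s₁ p₀
    have hsplit : W s₁ p₀ = V1 P π δ σ τ v i s₁ p₀ +
        δ i * ∑ p₁, w p₀ s₁ p₁ * ∑ s₂, P p₁ s₁ s₂ * (W s₂ p₁ - v i s₂ p₁) := by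
      rw [hW s₁ p₀, V1, Finset.mul_sum, ← Finset.sum_add_distrib]
      refine Finset.sum_congr rfl fun p₁ _ => ?_
      have hsub : ∑ s₂, P p₁ s₁ s₂ * (W s₂ p₁ - v i s₂ p₁) =
          (∑ s₂, P p₁ s₁ s₂ * W s₂ p₁) - ∑ s₂, P p₁ s₁ s₂ * v i s₂ p₁ := by
        rw [← Finset.sum_sub_distrib]
        exact Finset.sum_congr rfl fun _ _ => mul_sub _ _ _
      rw [hsub, hw]; ring
    linarith [hVle s₁ p₀, hsplit]
  have hcon := contraction_nonpos P hP (δ i) (le_of_lt (hδ i).1) (hδ i).2 w hw0 hw1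
    (fun s p => W s p - v i s p) hD
  exact fun s₁ p₀ => sub_nonpos.mp (hcon s₁ p₀)

/-- a stationary point `(σ*, v*)` of the `V₁` operator yields a Nash
equilibrium from time `t = 1`: (a) `v*` is the Bellman value of `σ*` (coincides with
the unique solution of the Bellman system); (b) the maximum of `V₁(σ*, ·, v*)` equals
the supremum of the Bellman values over unilateral deviations, attained at `σ*`; in
particular no unilateral one-memory deviation improves the Bellman value. -/
theorem stationary_point_is_nash_from_time_one
    {ι S A : Type*} [Fintype ι] [DecidableEq ι] [Nonempty ι]
    [Fintype S] [DecidableEq S] [Nonempty S]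
    [Fintype A] [DecidableEq A] [Nonempty A]
    (P : (ι → A) → S → S → ℝ) (hP : IsKernel P)
    (π : ι → (ι → A) → S → ℝ)
    (δ : ι → ℝ) (hδ : ∀ i, 0 < δ i ∧ δ i < 1)
    (σ : ι → (ι → A) → S → A → ℝ) (hσ : ∀ j, IsPolicy (σ j))
    (v : ι → S → (ι → A) → ℝ)
    (hfix : ∀ i s₁ p₀, v i s₁ p₀ = V1 P π δ σ (σ i) v i s₁ p₀)
    (hmax : ∀ i s₁ p₀ (τ : (ι → A) → S → A → ℝ), IsPolicy τ →
      V1 P π δ σ τ v i s₁ p₀ ≤ v i s₁ p₀) :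
    (∀ i (W : S → (ι → A) → ℝ), IsBellman P π δ σ i W → ∀ s₁ p₀, W s₁ p₀ = v i s₁ p₀) ∧
    (∀ i (τ : (ι → A) → S → A → ℝ), IsPolicy τ →
      ∀ W : S → (ι → A) → ℝ, IsBellman P π δ (Function.update σ i τ) i W →
        ∀ s₁ p₀, W s₁ p₀ ≤ v i s₁ p₀) := by
  have hprod : ∀ (i : ι) (p₀ : ι → A) (s₁ : S) (p₁ : ι → A),
      (∏ j, σ j p₀ s₁ (p₁ j)) =
        σ i p₀ s₁ (p₁ i) * ∏ j ∈ Finset.univ.erase i, σ j p₀ s₁ (p₁ j) :=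
    fun i p₀ s₁ p₁ => (Finset.mul_prod_erase Finset.univ _ (mem_univ i)).symm
  have hupd : ∀ (i : ι) (τ : (ι → A) → S → A → ℝ) (p₀ : ι → A) (s₁ : S) (p₁ : ι → A),
      (∏ j, (Function.update σ i τ) j p₀ s₁ (p₁ j)) =
        τ p₀ s₁ (p₁ i) * ∏ j ∈ Finset.univ.erase i, σ j p₀ s₁ (p₁ j) := by
    intro i τ p₀ s₁ p₁
    rw [← Finset.mul_prod_erase Finset.univ _ (mem_univ i), Function.update_self]
    congr 1
    exact Finset.prod_congr rfl fun j hj => by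
      rw [Function.update_of_ne (Finset.ne_of_mem_erase hj)]
  constructor
  · intro i W hW s₁ p₀
    have hle : ∀ s₁ p₀, W s₁ p₀ ≤ v i s₁ p₀ := by
      refine bellman_le P hP π δ hδ σ hσ v i (σ i) (hσ i)
        (fun s₁ p₀ => le_of_eq (hfix i s₁ p₀).symm) W ?_
      intro s₁ p₀
      rw [hW s₁ p₀]
      exact Finset.sum_congr rfl fun p₁ _ => by rw [← hprod i p₀ s₁ p₁]
    have hge : ∀ s₁ p₀, v i s₁ p₀ - W s₁ p₀ ≤ 0 := by
      refine contraction_nonpos P hP (δ i) (le_of_lt (hδ i).1) (hδ i).2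
        (fun p₀ s₁ p₁ => ∏ j, σ j p₀ s₁ (p₁ j))
        (fun p₀ s₁ p₁ => Finset.prod_nonneg fun j _ => (hσ j).1 _ _ _)
        (fun p₀ s₁ => by
          rw [← Fintype.prod_sum]
          exact Finset.prod_eq_one fun j _ => (hσ j).2 _ _)
        (fun s p => v i s p - W s p) ?_
      intro s₁ p₀
      show v i s₁ p₀ - W s₁ p₀ ≤ δ i * ∑ p₁ : ι → A, (∏ j, σ j p₀ s₁ (p₁ j)) *
        ∑ s₂, P p₁ s₁ s₂ * (v i s₂ p₁ - W s₂ p₁)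
      have hv : v i s₁ p₀ = ∑ p₁ : ι → A, (∏ j, σ j p₀ s₁ (p₁ j)) *
          (π i p₁ s₁ + δ i * ∑ s₂, P p₁ s₁ s₂ * v i s₂ p₁) := by
        rw [hfix i s₁ p₀, V1]
        exact Finset.sum_congr rfl fun p₁ _ => by rw [← hprod i p₀ s₁ p₁]
      rw [hv, hW s₁ p₀, ← Finset.sum_sub_distrib, Finset.mul_sum]
      refine le_of_eq (Finset.sum_congr rfl fun p₁ _ => ?_)
      have hsub : ∑ s₂, P p₁ s₁ s₂ * (v i s₂ p₁ - W s₂ p₁) =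
          (∑ s₂, P p₁ s₁ s₂ * v i s₂ p₁) - ∑ s₂, P p₁ s₁ s₂ * W s₂ p₁ := by
        rw [← Finset.sum_sub_distrib]
        exact Finset.sum_congr rfl fun _ _ => mul_sub _ _ _
      rw [hsub]; ring
    exact le_antisymm (hle s₁ p₀) (by linarith [hge s₁ p₀])
  · intro i τ hτ W hW
    refine bellman_le P hP π δ hδ σ hσ v i τ hτ
      (fun s₁ p₀ => hmax i s₁ p₀ τ hτ) W ?_
    intro s₁ p₀
    rw [hW s₁ p₀]
    exact Finset.sum_congr rfl fun p₁ _ => by rw [hupd i τ p₀ s₁ p₁]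
end

section
/- Let σ₁* ∈ Σ₁ be a Nash equilibrium from time t = 1 and set v*_{i,s₁,p₀} := Ṽ₁^i(s₁,p₀,σ₁^{i*}|σ₁^{-i*}). For each initial state s₀ ∈ S define v̂^i(p₀,s₀) := π^i(p₀,s₀) + δ_i Σ_{s₁∈S} P(s₁|p₀,s₀) v*_{i,s₁,p₀}. Then for every s₀ ∈ S there exists a profile of mixed strategies σ₀* = (σ₀^{1*},…,σ₀^{n*}), each σ₀^{i*} a probability distribution on A, such that for each i ∈ [n], σ₀^{i*} maximizes, over all probability distributions γ on A, the expected payoff Σ_{p₀∈Aⁿ} γ(p₀^i) ∏_{j≠i} σ₀^{j*}(p₀^j) · v̂^i(p₀,s₀); i.e., the n-person finite game with action set A and payoffs v̂^i(·,s₀) has a mixed-strategy Nash equilibrium, and hence the stochastic game admits a one-memory subgame perfect equilibrium (σ₀*, σ₁*). -/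
open Finset

section Aux

variable {ι S A : Type*} [Fintype ι] [DecidableEq ι] [Fintype S] [Fintype A]

/-- The Bellman operator. -/
def Tmap (P : (ι → A) → S → S → ℝ) (π : ι → (ι → A) → S → ℝ) (δ : ι → ℝ)
    (μ : ι → (ι → A) → S → A → ℝ) (i : ι) (W : S → (ι → A) → ℝ) : S → (ι → A) → ℝ :=
  fun s₁ p₀ => ∑ p₁ : ι → A, (∏ j, μ j p₀ s₁ (p₁ j)) *
    (π i p₁ s₁ + δ i * ∑ s₂, P p₁ s₁ s₂ * W s₂ p₁)

lemma isBellman_iff (P : (ι → A) → S → S → ℝ) (π : ι → (ι → A) → S → ℝ) (δ : ι → ℝ)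
    (μ : ι → (ι → A) → S → A → ℝ) (i : ι) (W : S → (ι → A) → ℝ) :
    IsBellman P π δ μ i W ↔ ∀ s p, W s p = Tmap P π δ μ i W s p := Iff.rfl

lemma sum_prod_policy (μ : ι → (ι → A) → S → A → ℝ) (hμ : ∀ j, IsPolicy (μ j))
    (p : ι → A) (s : S) : ∑ p₁ : ι → A, ∏ j, μ j p s (p₁ j) = 1 := by
  rw [← Fintype.piFinset_univ, ← Finset.prod_univ_sum]
  simp [(hμ _).2]

lemma Tmap_sub_le (P : (ι → A) → S → S → ℝ) (π : ι → (ι → A) → S → ℝ) (δ : ι → ℝ)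
    (μ : ι → (ι → A) → S → A → ℝ) (i : ι)
    (hP : IsKernel P) (hμ : ∀ j, IsPolicy (μ j)) (hδ : 0 ≤ δ i)
    {W W' : S → (ι → A) → ℝ} {C : ℝ} (hC : ∀ s p, W s p - W' s p ≤ C) :
    ∀ s p, Tmap P π δ μ i W s p - Tmap P π δ μ i W' s p ≤ δ i * C := by
  intro s p
  have h1 : Tmap P π δ μ i W s p - Tmap P π δ μ i W' s p
      = ∑ p₁ : ι → A, (∏ j, μ j p s (p₁ j)) *
          (δ i * ∑ s₂, P p₁ s s₂ * (W s₂ p₁ - W' s₂ p₁)) := by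
    rw [Tmap, Tmap, ← Finset.sum_sub_distrib]
    refine Finset.sum_congr rfl fun p₁ _ => ?_
    rw [← mul_sub, add_sub_add_left_eq_sub, ← mul_sub, ← Finset.sum_sub_distrib]
    congr 2
    exact Finset.sum_congr rfl fun s₂ _ => (mul_sub _ _ _).symm
  rw [h1]
  have hsum := sum_prod_policy μ hμ p s
  calc ∑ p₁ : ι → A, (∏ j, μ j p s (p₁ j)) *
          (δ i * ∑ s₂, P p₁ s s₂ * (W s₂ p₁ - W' s₂ p₁))
      ≤ ∑ p₁ : ι → A, (∏ j, μ j p s (p₁ j)) * (δ i * C) := by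
        refine Finset.sum_le_sum fun p₁ _ => ?_
        have hw : 0 ≤ ∏ j, μ j p s (p₁ j) :=
          Finset.prod_nonneg fun j _ => (hμ j).1 _ _ _
        refine mul_le_mul_of_nonneg_left ?_ hw
        refine mul_le_mul_of_nonneg_left ?_ hδ
        calc ∑ s₂, P p₁ s s₂ * (W s₂ p₁ - W' s₂ p₁)
            ≤ ∑ s₂, P p₁ s s₂ * C :=
              Finset.sum_le_sum fun s₂ _ =>
                mul_le_mul_of_nonneg_left (hC _ _) (hP.1 _ _ _)
          _ = C := by rw [← Finset.sum_mul, hP.2, one_mul]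
    _ = δ i * C := by rw [← Finset.sum_mul, hsum, one_mul]

lemma exists_bellman [Nonempty S] [Nonempty A]
    (P : (ι → A) → S → S → ℝ) (π : ι → (ι → A) → S → ℝ) (δ : ι → ℝ)
    (μ : ι → (ι → A) → S → A → ℝ) (i : ι)
    (hP : IsKernel P) (hμ : ∀ j, IsPolicy (μ j)) (hδ0 : 0 ≤ δ i) (hδ1 : δ i < 1) :
    ∃ W, IsBellman P π δ μ i W := by
  have hL : LipschitzWith ⟨δ i, hδ0⟩ (Tmap P π δ μ i) := by
    apply LipschitzWith.of_dist_le_mul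
    intro W W'
    have hd : (0:ℝ) ≤ dist W W' := dist_nonneg
    show dist (Tmap P π δ μ i W) (Tmap P π δ μ i W') ≤ δ i * dist W W'
    rw [dist_pi_le_iff (by positivity)]
    intro s
    rw [dist_pi_le_iff (by positivity)]
    intro p
    have hC : ∀ (f g : S → (ι → A) → ℝ), ∀ s p, f s p - g s p ≤ dist f g := by
      intro f g s p
      calc f s p - g s p ≤ |f s p - g s p| := le_abs_self _
        _ = dist (f s p) (g s p) := (Real.dist_eq _ _).symm
        _ ≤ dist (f s) (g s) := dist_le_pi_dist (f s) (g s) p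
        _ ≤ dist f g := dist_le_pi_dist f g s
    rw [Real.dist_eq, abs_sub_le_iff]
    have h2 : dist W' W = dist W W' := dist_comm _ _
    exact ⟨Tmap_sub_le P π δ μ i hP hμ hδ0 (fun s p => hC W W' s p) s p,
      h2 ▸ Tmap_sub_le P π δ μ i hP hμ hδ0 (fun s p => hC W' W s p) s p⟩
  have hcon : ContractingWith ⟨δ i, hδ0⟩ (Tmap P π δ μ i) :=
    ⟨by exact_mod_cast hδ1, hL⟩
  refine ⟨hcon.fixedPoint _, ?_⟩
  have hfix := hcon.fixedPoint_isFixedPt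
  intro s p
  conv_lhs => rw [← hfix]
  rfl

lemma le_bellman [Nonempty S] [Nonempty A]
    (P : (ι → A) → S → S → ℝ) (π : ι → (ι → A) → S → ℝ) (δ : ι → ℝ)
    (μ : ι → (ι → A) → S → A → ℝ) (i : ι)
    (hP : IsKernel P) (hμ : ∀ j, IsPolicy (μ j)) (hδ0 : 0 ≤ δ i) (hδ1 : δ i < 1)
    {W u : S → (ι → A) → ℝ} (hW : IsBellman P π δ μ i W)
    (hu : ∀ s p, u s p ≤ Tmap P π δ μ i u s p) :
    ∀ s p, u s p ≤ W s p := by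
  obtain ⟨⟨s₀, p₀⟩, hmax⟩ :=
    Finite.exists_max (fun x : S × (ι → A) => u x.1 x.2 - W x.1 x.2)
  set M := u s₀ p₀ - W s₀ p₀ with hM
  have hC : ∀ s p, u s p - W s p ≤ M := fun s p => hmax (s, p)
  have hstep : ∀ s p, u s p - W s p ≤ δ i * M := by
    intro s p
    calc u s p - W s p ≤ Tmap P π δ μ i u s p - Tmap P π δ μ i W s p := by
          have := hu s p
          have h2 : W s p = Tmap P π δ μ i W s p := hW s p
          linarith
      _ ≤ δ i * M := Tmap_sub_le P π δ μ i hP hμ hδ0 hC s p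
  have hM0 : M ≤ 0 := by
    have := hstep s₀ p₀
    nlinarith
  intro s p
  have := hC s p
  linarith

end Aux
/-- if `σ*` is a Nash equilibrium from time `t = 1` with Bellman values
`v*`, then for every initial state the one-shot game with payoffs
`v̂^i(p₀,s₀) = π^i(p₀,s₀) + δ_i Σ_{s₁} P(s₁|p₀,s₀) v*_{i,s₁,p₀}` has a mixed-strategy
Nash equilibrium `σ₀*`; hence `(σ₀*, σ₁*)` is a one-memory SPE. -/
theorem exists_one_memory_SPE
    {ι S A : Type*} [Fintype ι] [DecidableEq ι] [Nonempty ι]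
    [Fintype S] [DecidableEq S] [Nonempty S]
    [Fintype A] [DecidableEq A] [Nonempty A]
    (P : (ι → A) → S → S → ℝ) (hP : IsKernel P)
    (π : ι → (ι → A) → S → ℝ)
    (δ : ι → ℝ) (hδ : ∀ i, 0 < δ i ∧ δ i < 1)
    (σ : ι → (ι → A) → S → A → ℝ) (hσ : ∀ j, IsPolicy (σ j))
    (v : ι → S → (ι → A) → ℝ)
    (hv : ∀ i, IsBellman P π δ σ i (v i))
    (hNash : ∀ i (τ : (ι → A) → S → A → ℝ), IsPolicy τ →
      ∀ W : S → (ι → A) → ℝ, IsBellman P π δ (Function.update σ i τ) i W →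
        ∀ s₁ p₀, W s₁ p₀ ≤ v i s₁ p₀)
    (vhat : ι → (ι → A) → S → ℝ)
    (hvhat : ∀ i p₀ s₀, vhat i p₀ s₀ = π i p₀ s₀ + δ i * ∑ s₁, P p₀ s₀ s₁ * v i s₁ p₀) :
    ∀ s₀ : S, ∃ σ₀ : ι → A → ℝ,
      (∀ i, (∀ a, 0 ≤ σ₀ i a) ∧ ∑ a, σ₀ i a = 1) ∧
      (∀ i (γ : A → ℝ), (∀ a, 0 ≤ γ a) → (∑ a, γ a) = 1 →
        ∑ p₀ : ι → A, (γ (p₀ i) * ∏ j ∈ Finset.univ.erase i, σ₀ j (p₀ j)) * vhat i p₀ s₀ ≤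
        ∑ p₀ : ι → A, (σ₀ i (p₀ i) * ∏ j ∈ Finset.univ.erase i, σ₀ j (p₀ j)) * vhat i p₀ s₀) := by
  intro s₀
  obtain ⟨pstar⟩ : Nonempty (ι → A) := inferInstance
  refine ⟨fun j a => σ j pstar s₀ a,
    fun j => ⟨fun a => (hσ j).1 _ _ _, (hσ j).2 _ _⟩, ?_⟩
  intro i γ hγ0 hγ1
  show ∑ p₀ : ι → A,
      (γ (p₀ i) * ∏ j ∈ Finset.univ.erase i, σ j pstar s₀ (p₀ j)) * vhat i p₀ s₀ ≤
    ∑ p₀ : ι → A,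
      (σ i pstar s₀ (p₀ i) * ∏ j ∈ Finset.univ.erase i, σ j pstar s₀ (p₀ j)) * vhat i p₀ s₀
  by_contra hcon
  push_neg at hcon
  -- the one-shot deviation policy
  set τ : (ι → A) → S → A → ℝ :=
    fun p₀ s₁ a => if p₀ = pstar ∧ s₁ = s₀ then γ a else σ i p₀ s₁ a with hτdef
  have hτ : IsPolicy τ := by
    constructor
    · intro p₀ s₁ a
      simp only [hτdef]
      split
      · exact hγ0 a
      · exact (hσ i).1 _ _ _
    · intro p₀ s₁
      by_cases hc : p₀ = pstar ∧ s₁ = s₀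
      · simp only [hτdef, if_pos hc]; exact hγ1
      · simp only [hτdef, if_neg hc]; exact (hσ i).2 _ _
  set μ := Function.update σ i τ with hμdef
  have hμ : ∀ j, IsPolicy (μ j) := by
    intro j
    by_cases hj : j = i
    · subst hj; rw [hμdef, Function.update_self]; exact hτ
    · rw [hμdef, Function.update_of_ne hj]; exact hσ j
  have hprodσ : ∀ p₁ : ι → A, (∏ j, σ j pstar s₀ (p₁ j)) =
      σ i pstar s₀ (p₁ i) * ∏ j ∈ Finset.univ.erase i, σ j pstar s₀ (p₁ j) :=
    fun p₁ => (Finset.mul_prod_erase univ _ (mem_univ i)).symm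
  have hprodμ : ∀ p₁ : ι → A, (∏ j, μ j pstar s₀ (p₁ j)) =
      γ (p₁ i) * ∏ j ∈ Finset.univ.erase i, σ j pstar s₀ (p₁ j) := by
    intro p₁
    rw [← Finset.mul_prod_erase univ (fun j => μ j pstar s₀ (p₁ j)) (mem_univ i)]
    congr 1
    · rw [hμdef, Function.update_self]
      simp only [hτdef]
      simp
    · refine Finset.prod_congr rfl fun j hj => ?_
      rw [hμdef, Function.update_of_ne (Finset.ne_of_mem_erase hj)]
  have eqR : v i s₀ pstar =
      ∑ p₀ : ι → A,
        (σ i pstar s₀ (p₀ i) * ∏ j ∈ Finset.univ.erase i, σ j pstar s₀ (p₀ j)) *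
          vhat i p₀ s₀ := by
    rw [hv i s₀ pstar]
    refine Finset.sum_congr rfl fun p₁ _ => ?_
    rw [← hprodσ p₁, hvhat]
  have eqL : Tmap P π δ μ i (v i) s₀ pstar =
      ∑ p₀ : ι → A,
        (γ (p₀ i) * ∏ j ∈ Finset.univ.erase i, σ j pstar s₀ (p₀ j)) * vhat i p₀ s₀ := by
    simp only [Tmap]
    refine Finset.sum_congr rfl fun p₁ _ => ?_
    rw [hprodμ p₁, hvhat]
  have hu : ∀ s p, v i s p ≤ Tmap P π δ μ i (v i) s p := by
    intro s p
    by_cases hc : p = pstar ∧ s = s₀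
    · obtain ⟨rfl, rfl⟩ := hc
      rw [eqL, eqR]
      exact le_of_lt hcon
    · have hμσ : ∀ j, μ j p s = σ j p s := by
        intro j
        by_cases hj : j = i
        · subst hj
          rw [hμdef, Function.update_self]
          funext a
          simp only [hτdef]
          exact if_neg hc
        · rw [hμdef, Function.update_of_ne hj]
      have heq : Tmap P π δ μ i (v i) s p = v i s p := by
        rw [hv i s p]
        simp only [Tmap]
        refine Finset.sum_congr rfl fun p₁ _ => ?_
        congr 1
        exact Finset.prod_congr rfl fun j _ => by rw [hμσ j]
      rw [heq]
  obtain ⟨W, hW⟩ := exists_bellman P π δ μ i hP hμ (hδ i).1.le (hδ i).2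
  have hle := le_bellman P π δ μ i hP hμ (hδ i).1.le (hδ i).2 hW hu
  have h1 : Tmap P π δ μ i (v i) s₀ pstar ≤ W s₀ pstar := by
    have h2 := Tmap_sub_le P π δ μ i hP hμ (hδ i).1.le (W := v i) (W' := W) (C := 0)
      (fun s p => by linarith [hle s p]) s₀ pstar
    have h3 : W s₀ pstar = Tmap P π δ μ i W s₀ pstar := hW s₀ pstar
    linarith
  have h4 := hNash i τ hτ W hW s₀ pstar
  rw [eqL] at h1
  rw [eqR] at h4
  linarith
end

section
/- Fix α ∈ (0,1] and suppose (Q_f^i)_{i∈[n]}, with Q_f^i : (S × Aⁿ) × A → ℝ, is a fixed point of the Q-learning update with constant learning rate α: choosing for each firm i and each state 𝐬 = (s₁,p₀) ∈ S × Aⁿ an action w_f^i(𝐬) ∈ argmax_{p∈A} Q_f^i(𝐬,p), and writing w_f(𝐬) = (w_f^1(𝐬),…,w_f^n(𝐬)), assume Q_f^i(𝐬, w_f^i(𝐬)) = (1−α) Q_f^i(𝐬, w_f^i(𝐬)) + α[π^i(w_f(𝐬), s₁) + δ_i Σ_{s₂∈S} P(s₂|w_f(𝐬),s₁) max_{a∈A}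 Q_f^i((s₂, w_f(𝐬)), a)] for every i and every 𝐬. Then for every i and every 𝐬 ∈ S × Aⁿ, Q_f^i(𝐬, w_f^i(𝐬)) = Ṽ₁^i(𝐬, w_f^i | w_f^{-i}), where the right-hand side is the Bellman value of the pure one-memory profile induced by w_f; i.e., the function 𝐬 ↦ Q_f^i(𝐬, w_f^i(𝐬)) is the unique solution of the Bellman system for the profile w_f. -/
open Finset

/-- `W` solves the Bellman system of firm `i` under the pure one-memory profile `w`,
where states are pairs `(current market state, previous price profile)`. -/
def IsPureBellman {ι S A : Type*} [Fintype S]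
    (P : (ι → A) → S → S → ℝ) (π : ι → (ι → A) → S → ℝ) (δ : ι → ℝ)
    (w : ι → S × (ι → A) → A) (i : ι) (W : S × (ι → A) → ℝ) : Prop :=
  ∀ st : S × (ι → A), W st = π i (fun j => w j st) st.1 +
    δ i * ∑ s₂, P (fun j => w j st) st.1 s₂ * W (s₂, fun j => w j st)

/-!
Dividing the fixed-point identity by `α ≠ 0`, and replacing `max_a Q` by `Q` at the
maximiser `w`, turns it into the Bellman system for `w`. That system has at most one
solution: the difference `g` of two solutions satisfies `g = δ • (average of g)`, so at a
state where `|g|` is maximal, `|g| ≤ δ |g|` with `δ < 1`, hence `g = 0`.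
-/

lemma abs_discounted_average_le {S : Type*} [Fintype S] {p : S → ℝ}
    (hp0 : ∀ s, 0 ≤ p s) (hp1 : ∑ s, p s = 1) {δ : ℝ} (hδ : 0 ≤ δ)
    {f : S → ℝ} {M : ℝ} (hf : ∀ s, |f s| ≤ M) :
    |δ * ∑ s, p s * f s| ≤ δ * M := by
  rw [abs_mul, abs_of_nonneg hδ]
  refine mul_le_mul_of_nonneg_left ?_ hδ
  calc |∑ s, p s * f s| ≤ ∑ s, p s * |f s| := by
        refine (abs_sum_le_sum_abs _ _).trans_eq (sum_congr rfl fun s _ => ?_)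
        rw [abs_mul, abs_of_nonneg (hp0 s)]
    _ ≤ ∑ s, p s * M := sum_le_sum fun s _ => mul_le_mul_of_nonneg_left (hf s) (hp0 s)
    _ = M := by rw [← sum_mul, hp1, one_mul]

lemma eq_zero_of_eq_discounted_average {X S : Type*} [Finite X] [Fintype S]
    (p : X → S → ℝ) (next : X → S → X) (hp0 : ∀ x s, 0 ≤ p x s)
    (hp1 : ∀ x, ∑ s, p x s = 1) {δ : ℝ} (hδ0 : 0 ≤ δ) (hδ1 : δ < 1) {g : X → ℝ}
    (hg : ∀ x, g x = δ * ∑ s, p x s * g (next x s)) : g = 0 := by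
  have := Fintype.ofFinite X
  funext x
  obtain ⟨x₀, -, hmax⟩ := exists_max_image univ (fun y => |g y|) ⟨x, mem_univ x⟩
  have hcontract : |g x₀| ≤ δ * |g x₀| := by
    have h := abs_discounted_average_le (hp0 x₀) (hp1 x₀) hδ0
      fun s => hmax (next x₀ s) (mem_univ _)
    rwa [← hg x₀] at h
  have hx₀ : |g x₀| ≤ 0 := by nlinarith [abs_nonneg (g x₀)]
  exact abs_nonpos_iff.mp ((hmax x (mem_univ x)).trans hx₀)

lemma IsPureBellman.unique {ι S A : Type*} [Finite ι] [Fintype S] [Finite A]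
    {P : (ι → A) → S → S → ℝ} (hP : IsKernel P) {π : ι → (ι → A) → S → ℝ} {δ : ι → ℝ}
    {w : ι → S × (ι → A) → A} {i : ι} (hδ0 : 0 ≤ δ i) (hδ1 : δ i < 1)
    {W W' : S × (ι → A) → ℝ} (hW : IsPureBellman P π δ w i W)
    (hW' : IsPureBellman P π δ w i W') : W = W' := by
  refine sub_eq_zero.mp (eq_zero_of_eq_discounted_average
    (fun st => P (fun j => w j st) st.1) (fun st s₂ => (s₂, fun j => w j st))
    (fun _ _ => hP.1 _ _ _) (fun _ => hP.2 _ _) hδ0 hδ1 fun st => ?_)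
  simp only [Pi.sub_apply, mul_sub, sum_sub_distrib]
  rw [hW st, hW' st]
  ring

lemma eq_of_eq_one_sub_mul_add_mul {α x y : ℝ} (hα : α ≠ 0)
    (h : x = (1 - α) * x + α * y) : x = y :=
  mul_left_cancel₀ hα (by linarith)

theorem q_fixed_point_is_value_at_time_one_general
    {ι S A : Type*} [Fintype ι]
    [Fintype S]
    [Fintype A] [Nonempty A]
    (P : (ι → A) → S → S → ℝ) (hP : IsKernel P)
    (π : ι → (ι → A) → S → ℝ)
    (δ : ι → ℝ) (hδ : ∀ i, 0 < δ i ∧ δ i < 1)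
    (α : ℝ) (hα0 : 0 < α)
    (Q : ι → S × (ι → A) → A → ℝ)
    (w : ι → S × (ι → A) → A)
    (hw : ∀ i st a, Q i st a ≤ Q i st (w i st))
    (hfix : ∀ i (st : S × (ι → A)),
      Q i st (w i st) = (1 - α) * Q i st (w i st) +
        α * (π i (fun j => w j st) st.1 +
          δ i * ∑ s₂, P (fun j => w j st) st.1 s₂ *
            (Finset.univ.sup' Finset.univ_nonempty (Q i (s₂, fun j => w j st))))) :
    ∀ i, IsPureBellman P π δ w i (fun st => Q i st (w i st)) ∧
      (∀ W : S × (ι → A) → ℝ, IsPureBellman P π δ w i W →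
        W = fun st => Q i st (w i st)) := by
  intro i
  have hmax : ∀ st, univ.sup' univ_nonempty (Q i st) = Q i st (w i st) := fun st =>
    le_antisymm (sup'_le _ _ fun a _ => hw i st a) (le_sup' _ (mem_univ _))
  have hbell : IsPureBellman P π δ w i (fun st => Q i st (w i st)) := fun st => by
    simpa only [hmax] using eq_of_eq_one_sub_mul_add_mul hα0.ne' (hfix i st)
  exact ⟨hbell, fun W hW => hW.unique hP (hδ i).1.le (hδ i).2 hbell⟩

/-- a fixed point of the `Q`-learning update with constant learning rate
`α ∈ (0,1]` captures the value of the stochastic game at time `t = 1`: the function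
`𝐬 ↦ Q_f^i(𝐬, w_f^i(𝐬))` is the unique solution of the Bellman system for the pure
one-memory profile induced by `Q_f`. -/
theorem q_fixed_point_is_value_at_time_one
    {ι S A : Type*} [Fintype ι] [DecidableEq ι] [Nonempty ι]
    [Fintype S] [DecidableEq S] [Nonempty S]
    [Fintype A] [DecidableEq A] [Nonempty A]
    (P : (ι → A) → S → S → ℝ) (hP : IsKernel P)
    (π : ι → (ι → A) → S → ℝ)
    (δ : ι → ℝ) (hδ : ∀ i, 0 < δ i ∧ δ i < 1)
    (α : ℝ) (hα0 : 0 < α) (hα1 : α ≤ 1)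
    (Q : ι → S × (ι → A) → A → ℝ)
    (w : ι → S × (ι → A) → A)
    (hw : ∀ i st a, Q i st a ≤ Q i st (w i st))
    (hfix : ∀ i (st : S × (ι → A)),
      Q i st (w i st) = (1 - α) * Q i st (w i st) +
        α * (π i (fun j => w j st) st.1 +
          δ i * ∑ s₂, P (fun j => w j st) st.1 s₂ *
            (Finset.univ.sup' Finset.univ_nonempty (Q i (s₂, fun j => w j st))))) :
    ∀ i, IsPureBellman P π δ w i (fun st => Q i st (w i st)) ∧
      (∀ W : S × (ι → A) → ℝ, IsPureBellman P π δ w i W →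
        W = fun st => Q i st (w i st)) :=
  q_fixed_point_is_value_at_time_one_general P hP π δ hδ α hα0 Q w hw hfix
end

section
/- Fix α ∈ (0,1] and let (Q_f^i)_{i∈[n]} be a fixed point of the Q-learning update with constant learning rate α (as in the context), with induced pure actions w_f^i(𝐬) ∈ argmax_{p∈A} Q_f^i(𝐬,p). Define v ∈ ℝ^{[n]×S×Aⁿ} by v_{i,𝐬} := Q_f^i(𝐬, w_f^i(𝐬)). Suppose additionally that for every i and every 𝐬 = (s₁,p₀) ∈ S × Aⁿ, w_f^i(𝐬) maximizes over p ∈ A the quantity π^i((p, w_f^{-i}(𝐬)), s₁) + δ_i Σ_{s₂∈S} P(s₂|(p, w_f^{-i}(𝐬)), s₁) v_{i,(s₂,(p,w_f^{-i}(𝐬)))}. Then v_{i,𝐬} = max_{σ₁^i ∈ Σ₁^i} V₁(w_f, σ₁^i, v)_{i,𝐬} for every (i,𝐬), and the pure one-memory profile w_f is a Nash equilibrium from time t = 1: for every i, every 𝐬 and every one-memory policy σ₁^i, Ṽ₁^i(𝐬, σ₁^i | w_f^{-i}) ≤ v_{i,𝐬}. -/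
open Finset

/-- A one-memory policy, with states given as pairs `(market state, previous profile)`. -/
def IsPolicyP {ι S A : Type*} [Fintype A]
    (τ : S × (ι → A) → A → ℝ) : Prop :=
  (∀ st a, 0 ≤ τ st a) ∧ ∀ st, ∑ a, τ st a = 1

/-- The one-step value operator `V₁` (pair-state formulation). -/
def V1P {ι S A : Type*} [Fintype ι] [DecidableEq ι] [Fintype S] [Fintype A]
    (P : (ι → A) → S → S → ℝ) (π : ι → (ι → A) → S → ℝ) (δ : ι → ℝ)
    (σ : ι → S × (ι → A) → A → ℝ) (τ : S × (ι → A) → A → ℝ)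
    (v : ι → S × (ι → A) → ℝ) (i : ι) (st : S × (ι → A)) : ℝ :=
  ∑ p₁ : ι → A, (τ st (p₁ i) * ∏ j ∈ Finset.univ.erase i, σ j st (p₁ j)) *
    (π i p₁ st.1 + δ i * ∑ s₂, P p₁ st.1 s₂ * v i (s₂, p₁))

/-- `W` solves the Bellman system of firm `i` under a (mixed) one-memory profile `σ`. -/
def IsBellmanP {ι S A : Type*} [Fintype ι] [DecidableEq ι] [Fintype S] [Fintype A]
    (P : (ι → A) → S → S → ℝ) (π : ι → (ι → A) → S → ℝ) (δ : ι → ℝ)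
    (σ : ι → S × (ι → A) → A → ℝ) (i : ι) (W : S × (ι → A) → ℝ) : Prop :=
  ∀ st : S × (ι → A), W st = ∑ p₁ : ι → A, (∏ j, σ j st (p₁ j)) *
    (π i p₁ st.1 + δ i * ∑ s₂, P p₁ st.1 s₂ * W (s₂, p₁))


lemma sum_dirac_aux {ι A : Type*} [Fintype ι] [DecidableEq ι] [Fintype A] [DecidableEq A]
    (w : ι → A) (i : ι) (c : A → ℝ) (F : (ι → A) → ℝ) :
    ∑ p₁ : ι → A, (c (p₁ i) * ∏ j ∈ Finset.univ.erase i,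
        (if p₁ j = w j then (1:ℝ) else 0)) * F p₁
      = ∑ a : A, c a * F (Function.update w i a) := by
  have hinj := Function.update_injective w i
  have h1 : ∑ a : A, c a * F (Function.update w i a)
      = ∑ p₁ ∈ Finset.univ.image (Function.update w i),
          (c (p₁ i) * ∏ j ∈ Finset.univ.erase i,
            (if p₁ j = w j then (1:ℝ) else 0)) * F p₁ := by
    rw [Finset.sum_image (fun a _ b _ h => hinj h)]
    refine Finset.sum_congr rfl fun a _ => ?_
    have h2 : ∏ j ∈ Finset.univ.erase i,
        (if Function.update w i a j = w j then (1:ℝ) else 0) = 1 := by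
      apply Finset.prod_eq_one
      intro j hj
      rw [Function.update_of_ne (Finset.ne_of_mem_erase hj)]
      simp
    rw [Function.update_self, h2, mul_one]
  rw [h1]
  refine (Finset.sum_subset (Finset.subset_univ _) ?_).symm
  intro p₁ _ hp₁
  have hex : ∃ j, j ≠ i ∧ p₁ j ≠ w j := by
    by_contra h
    push_neg at h
    apply hp₁
    refine Finset.mem_image.2 ⟨p₁ i, Finset.mem_univ _, ?_⟩
    funext j
    by_cases hji : j = i
    · subst hji; simp
    · rw [Function.update_of_ne hji]; exact (h j hji).symm
  obtain ⟨j, hji, hj⟩ := hex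
  have hz : ∏ j ∈ Finset.univ.erase i, (if p₁ j = w j then (1:ℝ) else 0) = 0 :=
    Finset.prod_eq_zero (Finset.mem_erase.2 ⟨hji, Finset.mem_univ _⟩) (by simp [hj])
  rw [hz, mul_zero, zero_mul]

/-- a sufficient condition for a `Q`-learning fixed point to induce a Nash
equilibrium from time `t = 1`: if each induced action maximizes the one-stage quantity
built from `v`, then `v` is the coordinatewise maximum of `V₁(w_f, ·, v)` and the pure
profile induced by `Q_f` is a Nash equilibrium from time `t = 1`. -/
theorem q_fixed_point_induces_nash
    {ι S A : Type*} [Fintype ι] [DecidableEq ι] [Nonempty ι]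
    [Fintype S] [DecidableEq S] [Nonempty S]
    [Fintype A] [DecidableEq A] [Nonempty A]
    (P : (ι → A) → S → S → ℝ) (hP : IsKernel P)
    (π : ι → (ι → A) → S → ℝ)
    (δ : ι → ℝ) (hδ : ∀ i, 0 < δ i ∧ δ i < 1)
    (α : ℝ) (hα0 : 0 < α) (hα1 : α ≤ 1)
    (Q : ι → S × (ι → A) → A → ℝ)
    (w : ι → S × (ι → A) → A)
    (hw : ∀ i st a, Q i st a ≤ Q i st (w i st))
    (hfix : ∀ i (st : S × (ι → A)),
      Q i st (w i st) = (1 - α) * Q i st (w i st) +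
        α * (π i (fun j => w j st) st.1 +
          δ i * ∑ s₂, P (fun j => w j st) st.1 s₂ *
            (Finset.univ.sup' Finset.univ_nonempty (Q i (s₂, fun j => w j st)))))
    (v : ι → S × (ι → A) → ℝ)
    (hv : ∀ i st, v i st = Q i st (w i st))
    (hopt : ∀ i (st : S × (ι → A)) (a : A),
      π i (Function.update (fun j => w j st) i a) st.1 +
        δ i * ∑ s₂, P (Function.update (fun j => w j st) i a) st.1 s₂ *
          v i (s₂, Function.update (fun j => w j st) i a) ≤
      π i (fun j => w j st) st.1 +
        δ i * ∑ s₂, P (fun j => w j st) st.1 s₂ * v i (s₂, fun j => w j st)) :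
    (∀ i (st : S × (ι → A)) (τ : S × (ι → A) → A → ℝ), IsPolicyP τ →
      V1P P π δ (fun j st' a => if a = w j st' then (1 : ℝ) else 0) τ v i st ≤ v i st) ∧
    (∀ i (st : S × (ι → A)),
      v i st = V1P P π δ (fun j st' a => if a = w j st' then (1 : ℝ) else 0)
        (fun st' a => if a = w i st' then (1 : ℝ) else 0) v i st) ∧
    (∀ i (τ : S × (ι → A) → A → ℝ), IsPolicyP τ →
      ∀ W : S × (ι → A) → ℝ,
        IsBellmanP P π δ
          (Function.update (fun j st' a => if a = w j st' then (1 : ℝ) else 0) i τ) i W →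
        ∀ st, W st ≤ v i st) := by
  obtain ⟨hP1, hP2⟩ := hP
  -- the fixed-point value identity
  have hfixv : ∀ i st, v i st = π i (fun j => w j st) st.1 +
      δ i * ∑ s₂, P (fun j => w j st) st.1 s₂ * v i (s₂, fun j => w j st) := by
    intro i st
    have hsup : ∀ s₂ : S, Finset.univ.sup' Finset.univ_nonempty (Q i (s₂, fun j => w j st))
        = v i (s₂, fun j => w j st) := fun s₂ =>
      le_antisymm (Finset.sup'_le _ _ fun a _ => (hv i _).symm ▸ hw i _ a)
        ((hv i _) ▸ Finset.le_sup' _ (Finset.mem_univ _))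
    have h := hfix i st
    simp only [hsup] at h
    have h2 : α * Q i st (w i st) = α * (π i (fun j => w j st) st.1 +
        δ i * ∑ s₂, P (fun j => w j st) st.1 s₂ * v i (s₂, fun j => w j st)) := by
      linear_combination h
    rw [hv i st]
    exact mul_left_cancel₀ (ne_of_gt hα0) h2
  -- rewriting V1P under the pure profile
  have hV1P : ∀ i (st : S × (ι → A)) (τ : S × (ι → A) → A → ℝ),
      V1P P π δ (fun j st' a => if a = w j st' then (1 : ℝ) else 0) τ v i st
        = ∑ a : A, τ st a *
            (π i (Function.update (fun j => w j st) i a) st.1 +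
              δ i * ∑ s₂, P (Function.update (fun j => w j st) i a) st.1 s₂ *
                v i (s₂, Function.update (fun j => w j st) i a)) := by
    intro i st τ
    exact sum_dirac_aux (fun j => w j st) i (τ st)
      (fun p₁ => π i p₁ st.1 + δ i * ∑ s₂, P p₁ st.1 s₂ * v i (s₂, p₁))
  refine ⟨?_, ?_, ?_⟩
  · -- part 1
    intro i st τ hτ
    rw [hV1P i st τ]
    calc ∑ a : A, τ st a *
          (π i (Function.update (fun j => w j st) i a) st.1 +
            δ i * ∑ s₂, P (Function.update (fun j => w j st) i a) st.1 s₂ *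
              v i (s₂, Function.update (fun j => w j st) i a))
        ≤ ∑ a : A, τ st a * v i st :=
          Finset.sum_le_sum fun a _ => mul_le_mul_of_nonneg_left
            ((hopt i st a).trans_eq (hfixv i st).symm) (hτ.1 st a)
      _ = v i st := by rw [← Finset.sum_mul, hτ.2 st, one_mul]
  · -- part 2
    intro i st
    rw [hV1P i st]
    have hupd : Function.update (fun j => w j st) i (w i st) = fun j => w j st :=
      Function.update_eq_self i (fun j => w j st)
    rw [show (∑ a : A, (if a = w i st then (1:ℝ) else 0) *
        (π i (Function.update (fun j => w j st) i a) st.1 +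
          δ i * ∑ s₂, P (Function.update (fun j => w j st) i a) st.1 s₂ *
            v i (s₂, Function.update (fun j => w j st) i a)))
      = π i (Function.update (fun j => w j st) i (w i st)) st.1 +
          δ i * ∑ s₂, P (Function.update (fun j => w j st) i (w i st)) st.1 s₂ *
            v i (s₂, Function.update (fun j => w j st) i (w i st)) from by
        rw [Finset.sum_eq_single (w i st)]
        · simp
        · intro b _ hb; simp [hb]
        · intro h; exact absurd (Finset.mem_univ _) h]
    rw [hupd]
    exact hfixv i st
  · -- part 3
    intro i τ hτ W hW
    have hW' : ∀ st : S × (ι → A), W st = ∑ a : A, τ st a *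
        (π i (Function.update (fun j => w j st) i a) st.1 +
          δ i * ∑ s₂, P (Function.update (fun j => w j st) i a) st.1 s₂ *
            W (s₂, Function.update (fun j => w j st) i a)) := by
      intro st
      rw [hW st]
      have h0 : ∀ p₁ : ι → A,
          (∏ j, (Function.update (fun j st' a => if a = w j st' then (1 : ℝ) else 0) i τ) j st (p₁ j)) *
            (π i p₁ st.1 + δ i * ∑ s₂, P p₁ st.1 s₂ * W (s₂, p₁))
          = (τ st (p₁ i) * ∏ j ∈ Finset.univ.erase i,
              (if p₁ j = w j st then (1:ℝ) else 0)) *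
            (π i p₁ st.1 + δ i * ∑ s₂, P p₁ st.1 s₂ * W (s₂, p₁)) := by
        intro p₁
        congr 1
        rw [← Finset.mul_prod_erase Finset.univ _ (Finset.mem_univ i), Function.update_self]
        congr 1
        refine Finset.prod_congr rfl fun j hj => ?_
        rw [Function.update_of_ne (Finset.ne_of_mem_erase hj)]
      exact (Finset.sum_congr rfl fun p₁ _ => h0 p₁).trans
        (sum_dirac_aux (fun j => w j st) i (τ st)
          (fun p₁ => π i p₁ st.1 + δ i * ∑ s₂, P p₁ st.1 s₂ * W (s₂, p₁)))
    obtain ⟨st₀, -, hst₀⟩ := Finset.exists_mem_eq_sup' (Finset.univ_nonempty)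
      (fun st : S × (ι → A) => W st - v i st)
    have hMle : ∀ st : S × (ι → A), W st - v i st ≤ W st₀ - v i st₀ := fun st => by
      have := Finset.le_sup' (fun st : S × (ι → A) => W st - v i st) (Finset.mem_univ st)
      rw [← hst₀]; exact this
    have hδ0 := (hδ i).1
    have hδ1 := (hδ i).2
    have hkey : W st₀ ≤ v i st₀ + δ i * (W st₀ - v i st₀) := by
      conv_lhs => rw [hW' st₀]
      have hterm : ∀ a : A, τ st₀ a *
          (π i (Function.update (fun j => w j st₀) i a) st₀.1 +
            δ i * ∑ s₂, P (Function.update (fun j => w j st₀) i a) st₀.1 s₂ *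
              W (s₂, Function.update (fun j => w j st₀) i a)) ≤
          τ st₀ a * (v i st₀ + δ i * (W st₀ - v i st₀)) := by
        intro a
        apply mul_le_mul_of_nonneg_left _ (hτ.1 st₀ a)
        have hsum : ∑ s₂, P (Function.update (fun j => w j st₀) i a) st₀.1 s₂ *
              W (s₂, Function.update (fun j => w j st₀) i a) ≤
            (∑ s₂, P (Function.update (fun j => w j st₀) i a) st₀.1 s₂ *
              v i (s₂, Function.update (fun j => w j st₀) i a)) + (W st₀ - v i st₀) := by
          have h1 : ∑ s₂, P (Function.update (fun j => w j st₀) i a) st₀.1 s₂ *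
                W (s₂, Function.update (fun j => w j st₀) i a) ≤
              ∑ s₂, P (Function.update (fun j => w j st₀) i a) st₀.1 s₂ *
                (v i (s₂, Function.update (fun j => w j st₀) i a) + (W st₀ - v i st₀)) := by
            refine Finset.sum_le_sum fun s₂ _ => mul_le_mul_of_nonneg_left ?_ (hP1 _ _ s₂)
            have := hMle (s₂, Function.update (fun j => w j st₀) i a)
            linarith
          calc _ ≤ _ := h1
          _ = _ := by
            simp only [mul_add, Finset.sum_add_distrib, ← Finset.sum_mul, hP2, one_mul]
        have hba := hopt i st₀ a
        have hfv := hfixv i st₀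
        nlinarith [hsum]
      calc ∑ a : A, τ st₀ a *
            (π i (Function.update (fun j => w j st₀) i a) st₀.1 +
              δ i * ∑ s₂, P (Function.update (fun j => w j st₀) i a) st₀.1 s₂ *
                W (s₂, Function.update (fun j => w j st₀) i a))
          ≤ ∑ a : A, τ st₀ a * (v i st₀ + δ i * (W st₀ - v i st₀)) :=
            Finset.sum_le_sum fun a _ => hterm a
        _ = v i st₀ + δ i * (W st₀ - v i st₀) := by rw [← Finset.sum_mul, hτ.2 st₀, one_mul]
    have hM0 : W st₀ - v i st₀ ≤ 0 := by nlinarith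
    intro st
    have := hMle st
    linarith
end

section
/- (Q-learning convergence to supracompetitive prices.) Assume the learning-rate assumption holds and that for every i ∈ [n], every p ∈ A∖{p^C} and every s ∈ {𝐩_{T−1}, 𝐩^C}: (i) Q_T^i(s, p^C) > Q_T^i(s, p); and (ii) π^i(𝐩^C) ≥ (1−δ_i) Q_T^i(𝐩^C, p). Then under the post-experimentation dynamics, for every t ≥ T and every firm i, p_t^i = p^C; moreover for every i, s ∈ Aⁿ and p ∈ A the limit Q^{i*}(s,p) := lim_{t→∞} Q_t^i(s,p) exists and equals: α(δ_i) π^i(𝐩^C) if (s,p) = (𝐩^C, p^C); (1−α_T) Q_T^i(𝐩_{T−1}, p^C) + α_T[π^i(𝐩^C) + δ_i Q_T^i(𝐩^C, p^C)] if (s,p) = (𝐩_{T−1}, p^C) and 𝐩_{T−1} ≠ 𝐩^C; and Q_T^i(s,p) in all other cases. -/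
open Finset Filter

private lemma sup'_eq_of_max' {A : Type*} [Fintype A] [Nonempty A]
    (f : A → ℝ) (a0 : A) (h : ∀ a, f a ≤ f a0) :
    Finset.univ.sup' Finset.univ_nonempty f = f a0 :=
  le_antisymm (Finset.sup'_le _ _ fun a _ => h a) (Finset.le_sup' f (Finset.mem_univ a0))

private lemma prod_tendsto_zero' (α : ℕ → ℝ) (c : ℝ) (N : ℕ)
    (hc : 0 < c) (hc1 : c ≤ 1)
    (hα : ∀ t, N ≤ t → 0 < α t ∧ α t < 1)
    (hdiv : Tendsto (fun t => ∑ k ∈ Finset.Icc N t, α k) atTop atTop) :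
    Tendsto (fun t => ∏ l ∈ Finset.Icc N t, (1 - α l * c)) atTop (nhds 0) := by
  have hnn : ∀ t, 0 ≤ ∏ l ∈ Finset.Icc N t, (1 - α l * c) := by
    intro t
    apply Finset.prod_nonneg
    intro l hl
    have hl' := hα l (Finset.mem_Icc.mp hl).1
    nlinarith [hl'.1, hl'.2]
  have hub : ∀ t, ∏ l ∈ Finset.Icc N t, (1 - α l * c)
      ≤ Real.exp (-(c * ∑ k ∈ Finset.Icc N t, α k)) := by
    intro t
    have : -(c * ∑ k ∈ Finset.Icc N t, α k) = ∑ k ∈ Finset.Icc N t, (-(α k * c)) := by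
      rw [Finset.mul_sum, ← Finset.sum_neg_distrib]
      congr 1; ext k; ring
    rw [this, Real.exp_sum]
    apply Finset.prod_le_prod
    · intro l hl
      have hl' := hα l (Finset.mem_Icc.mp hl).1
      nlinarith [hl'.1, hl'.2]
    · intro l _
      linarith [Real.add_one_le_exp (-(α l * c))]
  have hexp : Tendsto (fun t => Real.exp (-(c * ∑ k ∈ Finset.Icc N t, α k))) atTop (nhds 0) := by
    apply Real.tendsto_exp_atBot.comp
    exact tendsto_neg_atBot_iff.mpr (hdiv.const_mul_atTop hc)
  exact tendsto_of_tendsto_of_tendsto_of_le_of_le tendsto_const_nhds hexp hnn hub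

private lemma closed_form' (q b a : ℕ → ℝ) (c : ℝ) (N : ℕ)
    (hrec : ∀ t, N ≤ t → q (t + 1) = (1 - b t) * q t + a t * c) :
    ∀ t, N ≤ t → q (t + 1) =
      (∏ l ∈ Finset.Icc N t, (1 - b l)) * q N
        + c * ∑ k ∈ Finset.Icc N t, (∏ l ∈ Finset.Icc (k + 1) t, (1 - b l)) * a k := by
  intro t ht
  induction t, ht using Nat.le_induction with
  | base =>
    rw [hrec N le_rfl]
    rw [Finset.Icc_self, Finset.prod_singleton, Finset.sum_singleton,
      Finset.Icc_eq_empty (by omega), Finset.prod_empty]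
    ring
  | succ t ht ih =>
    rw [hrec (t + 1) (by omega), ih]
    rw [Finset.prod_Icc_succ_top (by omega), Finset.sum_Icc_succ_top (by omega)]
    rw [Finset.Icc_eq_empty (by omega : ¬ (t + 1 + 1 ≤ t + 1)), Finset.prod_empty]
    have hin : ∀ k ∈ Finset.Icc N t,
        (∏ l ∈ Finset.Icc (k + 1) (t + 1), (1 - b l)) * a k
          = ((∏ l ∈ Finset.Icc (k + 1) t, (1 - b l)) * a k) * (1 - b (t + 1)) := by
      intro k hk
      have hk' := (Finset.mem_Icc.mp hk).2
      rw [Finset.prod_Icc_succ_top (by omega)]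
      ring
    rw [Finset.sum_congr rfl hin, ← Finset.sum_mul]
    ring

/-- Q-learning convergence to supracompetitive prices. Under the
post-experimentation dynamics, if at the end of experimentation the Q-functions favor
the collusive-enabling price `p^C` at the states `𝐩_{T−1}` and `𝐩^C` (condition (i)),
and the collusive profit dominates `(1−δ_i)`-scaled Q-values at `𝐩^C` (condition (ii)),
then every firm plays `p^C` at every `t ≥ T`, and the Q-values converge to the stated
limits. -/
theorem q_learning_convergence_to_supracompetitive_prices
    {ι A : Type*} [Fintype ι] [DecidableEq ι] [Nonempty ι]
    [Fintype A] [DecidableEq A] [Nonempty A]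
    (π : ι → (ι → A) → ℝ) (hπ : ∀ i p, 0 ≤ π i p)
    (δ : ι → ℝ) (hδ : ∀ i, 0 < δ i ∧ δ i < 1)
    (pC : A) (T : ℕ) (hT : 1 ≤ T)
    (α : ℕ → ℝ) (hα : ∀ t, T ≤ t → 0 < α t ∧ α t < 1)
    (hαdiv : Tendsto (fun t => ∑ k ∈ Finset.Icc T t, α k) atTop atTop)
    (Ad : ι → ℝ) (hAdpos : ∀ i, 0 < Ad i)
    (hAd : ∀ i, Tendsto (fun t => ∑ k ∈ Finset.Icc (T + 1) t,
        (∏ l ∈ Finset.Icc (k + 1) t, (1 - α l * (1 - δ i))) * α k) atTop (nhds (Ad i)))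
    -- the trajectory of the post-experimentation dynamics
    (Q : ℕ → ι → (ι → A) → A → ℝ)
    (p : ℕ → ι → A)          -- `p t` is the price profile chosen at time `t ≥ T`
    (st : ℕ → ι → A)         -- `st t` is the state at time `t`, i.e. `𝐩_{t−1}`
    (pT1 : ι → A)            -- the initial state `𝐩_{T−1}`
    (hst : st T = pT1)
    (hstep : ∀ t, T ≤ t → st (t + 1) = p t)
    (hargmax : ∀ t, T ≤ t → ∀ i a, Q t i (st t) a ≤ Q t i (st t) (p t i))
    (hupd : ∀ t, T ≤ t → ∀ i s a,
      Q (t + 1) i s a =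
        if s = st t ∧ a = p t i then
          (1 - α t) * Q t i (st t) (p t i) +
            α t * (π i (p t) + δ i * Finset.univ.sup' Finset.univ_nonempty (Q t i (p t)))
        else Q t i s a)
    -- condition (i)
    (hi : ∀ i a, a ≠ pC →
      Q T i pT1 pC > Q T i pT1 a ∧
      Q T i (fun _ => pC) pC > Q T i (fun _ => pC) a)
    -- condition (ii)
    (hii : ∀ i a, a ≠ pC → π i (fun _ => pC) ≥ (1 - δ i) * Q T i (fun _ => pC) a) :
    (∀ t, T ≤ t → ∀ i, p t i = pC) ∧
    (∀ i (s : ι → A) (a : A),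
      Tendsto (fun t => Q t i s a) atTop (nhds
        (if s = (fun _ => pC) ∧ a = pC then Ad i * π i (fun _ => pC)
         else if s = pT1 ∧ a = pC then
           (1 - α T) * Q T i pT1 pC +
             α T * (π i (fun _ => pC) + δ i * Q T i (fun _ => pC) pC)
         else Q T i s a))) := by
  set C : ι → A := (fun _ => pC) with hCdef
  -- key invariant
  have key : ∀ t, T ≤ t →
      (∀ i a, a ≠ pC → Q t i C a = Q T i C a) ∧
      (∀ i a, a ≠ pC → Q T i C a < Q t i C pC) ∧
      (∀ i, p t i = pC) := by
    intro t ht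
    induction t, ht using Nat.le_induction with
    | base =>
      refine ⟨fun i a _ => rfl, fun i a ha => (hi i a ha).2, fun i => ?_⟩
      by_contra hne
      have h1 := hargmax T le_rfl i pC
      rw [hst] at h1
      exact absurd h1 (not_le.mpr (hi i (p T i) hne).1)
    | succ t ht ih =>
      obtain ⟨ihQ, ihgt, ihp⟩ := ih
      have hptC : p t = C := funext ihp
      have hQa : ∀ i a, a ≠ pC → Q (t + 1) i C a = Q T i C a := by
        intro i a ha
        rw [hupd t ht i C a, if_neg, ihQ i a ha]
        rintro ⟨_, h2⟩; exact ha (h2.trans (ihp i))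
      have hgt : ∀ i a, a ≠ pC → Q T i C a < Q (t + 1) i C pC := by
        intro i a ha
        rw [hupd t ht i C pC]
        by_cases hsC : C = st t
        · rw [if_pos ⟨hsC, (ihp i).symm⟩, ← hsC, ihp i, hptC]
          have hsup : Q t i C pC ≤ Finset.univ.sup' Finset.univ_nonempty (Q t i C) :=
            Finset.le_sup' _ (Finset.mem_univ pC)
          have hαt := hα t ht
          have hδi := hδ i
          have hq := ihgt i a ha
          have hπ' := hii i a ha
          nlinarith [mul_le_mul_of_nonneg_left (mul_le_mul_of_nonneg_left hsup hδi.1.le) hαt.1.le,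
            mul_pos (show (0:ℝ) < 1 - α t * (1 - δ i) by nlinarith [hαt.1, hαt.2, hδi.1, hδi.2])
              (sub_pos.mpr hq),
            mul_le_mul_of_nonneg_left hπ' hαt.1.le]
        · rw [if_neg (fun h => hsC h.1)]
          exact ihgt i a ha
      refine ⟨hQa, hgt, fun i => ?_⟩
      by_contra hne
      have hstt1 : st (t + 1) = C := (hstep t ht).trans hptC
      have h1 := hargmax (t + 1) (by omega) i pC
      rw [hstt1] at h1
      have h2 : Q (t + 1) i C (p (t + 1) i) = Q T i C (p (t + 1) i) := hQa i _ hne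
      have h3 := hgt i (p (t + 1) i) hne
      linarith
  have hstC : ∀ t, T < t → st t = C := by
    intro t ht
    obtain ⟨u, hu, rfl⟩ : ∃ u, T ≤ u ∧ t = u + 1 := ⟨t - 1, by omega, by omega⟩
    exact (hstep u hu).trans (funext (key u hu).2.2)
  -- unchanged entries
  have hfix : ∀ (s : ι → A) (a : A), ¬(s = pT1 ∧ a = pC) → ¬(s = C ∧ a = pC) →
      ∀ i t, T ≤ t → Q t i s a = Q T i s a := by
    intro s a h1 h2 i t ht
    induction t, ht using Nat.le_induction with
    | base => rfl
    | succ t ht ih =>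
      rw [hupd t ht i s a, if_neg, ih]
      rintro ⟨hs, ha'⟩
      have haC : a = pC := ha'.trans ((key t ht).2.2 i)
      rcases eq_or_lt_of_le ht with h | h
      · refine h1 ⟨?_, haC⟩
        rw [hs, ← h, hst]
      · exact h2 ⟨hs.trans (hstC t h), haC⟩
  have hsupT : ∀ i, Finset.univ.sup' Finset.univ_nonempty (Q T i C) = Q T i C pC := by
    intro i
    refine sup'_eq_of_max' _ _ fun a => ?_
    by_cases ha : a = pC
    · rw [ha]
    · exact ((hi i a ha).2).le
  -- entry (pT1, pC) when pT1 ≠ C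
  have hpT1val : pT1 ≠ C → ∀ i t, T + 1 ≤ t →
      Q t i pT1 pC = (1 - α T) * Q T i pT1 pC + α T * (π i C + δ i * Q T i C pC) := by
    intro hne i t ht
    induction t, ht using Nat.le_induction with
    | base =>
      have hpT : p T = C := funext (key T le_rfl).2.2
      rw [hupd T le_rfl i pT1 pC, if_pos ⟨hst.symm, ((key T le_rfl).2.2 i).symm⟩, hst,
        (key T le_rfl).2.2 i, hpT, hsupT i]
    | succ t ht ih =>
      rw [hupd t (by omega) i pT1 pC, if_neg, ih]
      rintro ⟨hs, _⟩
      exact hne (hs.trans (hstC t (by omega)))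
  -- recursion for entry (C, pC)
  have hrec : ∀ i t, T + 1 ≤ t →
      Q (t + 1) i C pC = (1 - α t * (1 - δ i)) * Q t i C pC + α t * π i C := by
    intro i t ht
    have ht' : T ≤ t := by omega
    have hstt : st t = C := hstC t (by omega)
    have hsup : Finset.univ.sup' Finset.univ_nonempty (Q t i C) = Q t i C pC := by
      refine sup'_eq_of_max' _ _ fun a => ?_
      by_cases ha : a = pC
      · rw [ha]
      · rw [(key t ht').1 i a ha]
        exact le_of_lt ((key t ht').2.1 i a ha)
    have hpt : p t = C := funext (key t ht').2.2
    rw [hupd t ht' i C pC, if_pos ⟨hstt.symm, ((key t ht').2.2 i).symm⟩, hstt,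
      (key t ht').2.2 i, hpt, hsup]
    ring
  -- limit at (C, pC)
  have hlimC : ∀ i, Tendsto (fun t => Q t i C pC) atTop (nhds (Ad i * π i C)) := by
    intro i
    have hb := closed_form' (fun t => Q t i C pC) (fun t => α t * (1 - δ i)) α (π i C) (T + 1)
      (fun t ht => hrec i t ht)
    have hdiv' : Tendsto (fun t => ∑ k ∈ Finset.Icc (T + 1) t, α k) atTop atTop := by
      have heq : ∀ᶠ t in atTop, (∑ k ∈ Finset.Icc T t, α k) - α T
          = ∑ k ∈ Finset.Icc (T + 1) t, α k := by
        filter_upwards [eventually_ge_atTop T] with t ht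
        have hIoc : Finset.Icc (T + 1) t = Finset.Ioc T t := by
          ext x; simp
        rw [hIoc, Finset.Icc_eq_cons_Ioc ht, Finset.sum_cons]
        ring
      exact Tendsto.congr' heq (tendsto_atTop_add_const_right atTop (-(α T)) hαdiv)
    have hδi := hδ i
    have hP := prod_tendsto_zero' α (1 - δ i) (T + 1) (by linarith) (by linarith)
      (fun t ht => hα t (by omega)) hdiv'
    have hS := hAd i
    have hcomb : Tendsto (fun t =>
        (∏ l ∈ Finset.Icc (T + 1) t, (1 - α l * (1 - δ i))) * Q (T + 1) i C pC
          + π i C * ∑ k ∈ Finset.Icc (T + 1) t,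
              (∏ l ∈ Finset.Icc (k + 1) t, (1 - α l * (1 - δ i))) * α k) atTop
        (nhds (0 * Q (T + 1) i C pC + π i C * Ad i)) :=
      (hP.mul_const _).add (hS.const_mul _)
    rw [zero_mul, zero_add] at hcomb
    have h2 : Tendsto (fun t => Q (t + 1) i C pC) atTop (nhds (π i C * Ad i)) := by
      refine Tendsto.congr' ?_ hcomb
      filter_upwards [eventually_ge_atTop (T + 1)] with t ht
      exact (hb t ht).symm
    rw [mul_comm]
    exact (tendsto_add_atTop_iff_nat 1).mp h2
  refine ⟨fun t ht i => (key t ht).2.2 i, fun i s a => ?_⟩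
  by_cases h1 : s = C ∧ a = pC
  · rw [if_pos h1]
    obtain ⟨rfl, rfl⟩ := h1
    exact hlimC i
  · rw [if_neg h1]
    by_cases h2 : s = pT1 ∧ a = pC
    · rw [if_pos h2]
      obtain ⟨hs, rfl⟩ := h2
      rw [hs]
      have hne : pT1 ≠ C := fun h => h1 ⟨hs.trans h, rfl⟩
      refine Tendsto.congr' ?_ tendsto_const_nhds
      filter_upwards [eventually_ge_atTop (T + 1)] with t ht
      exact (hpT1val hne i t ht).symm
    · rw [if_neg h2]
      refine Tendsto.congr' ?_ tendsto_const_nhds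
      filter_upwards [eventually_ge_atTop T] with t ht
      exact (hfix s a h2 h1 i t ht).symm
end

section
/- Assume the learning-rate assumption holds and that for every i ∈ [n], every p ∈ A∖{p^C} and every s ∈ {𝐩_{T−1}, 𝐩^C}: (i) Q_T^i(s, p^C) > Q_T^i(s, p); and (ii) π^i(𝐩^C) ≥ (1−δ_i) Q_T^i(𝐩^C, p). Then under the post-experimentation dynamics, for all i ∈ [n] and t ≥ T: p_t^i = p^C and Q_t^i(𝐩_{t−1}, p^C) > Q_t^i(𝐩_{t−1}, p) for all p ∈ A∖{p^C}; moreover Q_{T+1}^i(s,p) = (1−α_T) Q_T^i(𝐩_{T−1}, p^C) + α_T[π^i(𝐩^C) + δ_i Q_T^i(𝐩^C, p^C)] if (s,p) = (𝐩_{T−1}, p^C) and Q_{T+1}^i(s,p) = Q_T^i(s,p) otherwise; and for every t ≥ T+1, Q_t^i(s,p) = Q_{T+1}^i(s,p) for (s,p) ≠ (𝐩^C, p^C), while Q_t^i(𝐩^C, p^C) = (∏_{k=T+1}^{t−1} (1−α_k(1−δ_i))) Q_{T+1}^i(𝐩^C, p^C) + Σ_{k=T+1}^{t−1} (∏_{l=k+1}^{t−1}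 (1−α_l(1−δ_i))) α_k π^i(𝐩^C). -/
open Finset Filter

/-- the detailed description of the post-experimentation Q-learning
trajectory: all firms play `p^C` from time `T` on, `p^C` remains the strict maximizer
of `Q_t^i(𝐩_{t−1}, ·)`, and the Q-values evolve by the explicit formulas (only the
entry at `(𝐩^C, p^C)` keeps being updated after time `T + 1`). -/
theorem q_learning_trajectory_description
    {ι A : Type*} [Fintype ι] [DecidableEq ι] [Nonempty ι]
    [Fintype A] [DecidableEq A] [Nonempty A]
    (π : ι → (ι → A) → ℝ) (hπ : ∀ i p, 0 ≤ π i p)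
    (δ : ι → ℝ) (hδ : ∀ i, 0 < δ i ∧ δ i < 1)
    (pC : A) (T : ℕ) (hT : 1 ≤ T)
    (α : ℕ → ℝ) (hα : ∀ t, T ≤ t → 0 < α t ∧ α t < 1)
    (hαdiv : Tendsto (fun t => ∑ k ∈ Finset.Icc T t, α k) atTop atTop)
    (Ad : ι → ℝ) (hAdpos : ∀ i, 0 < Ad i)
    (hAd : ∀ i, Tendsto (fun t => ∑ k ∈ Finset.Icc (T + 1) t,
        (∏ l ∈ Finset.Icc (k + 1) t, (1 - α l * (1 - δ i))) * α k) atTop (nhds (Ad i)))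
    -- the trajectory of the post-experimentation dynamics
    (Q : ℕ → ι → (ι → A) → A → ℝ)
    (p : ℕ → ι → A)          -- `p t` is the price profile chosen at time `t ≥ T`
    (st : ℕ → ι → A)         -- `st t` is the state at time `t`, i.e. `𝐩_{t−1}`
    (pT1 : ι → A)            -- the initial state `𝐩_{T−1}`
    (hst : st T = pT1)
    (hstep : ∀ t, T ≤ t → st (t + 1) = p t)
    (hargmax : ∀ t, T ≤ t → ∀ i a, Q t i (st t) a ≤ Q t i (st t) (p t i))
    (hupd : ∀ t, T ≤ t → ∀ i s a,
      Q (t + 1) i s a =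
        if s = st t ∧ a = p t i then
          (1 - α t) * Q t i (st t) (p t i) +
            α t * (π i (p t) + δ i * Finset.univ.sup' Finset.univ_nonempty (Q t i (p t)))
        else Q t i s a)
    -- condition (i)
    (hi : ∀ i a, a ≠ pC →
      Q T i pT1 pC > Q T i pT1 a ∧
      Q T i (fun _ => pC) pC > Q T i (fun _ => pC) a)
    -- condition (ii)
    (hii : ∀ i a, a ≠ pC → π i (fun _ => pC) ≥ (1 - δ i) * Q T i (fun _ => pC) a) :
    (∀ t, T ≤ t → ∀ i, p t i = pC) ∧
    (∀ t, T ≤ t → ∀ i a, a ≠ pC → Q t i (st t) pC > Q t i (st t) a) ∧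
    (∀ i (s : ι → A) (a : A),
      Q (T + 1) i s a =
        if s = pT1 ∧ a = pC then
          (1 - α T) * Q T i pT1 pC +
            α T * (π i (fun _ => pC) + δ i * Q T i (fun _ => pC) pC)
        else Q T i s a) ∧
    (∀ t, T + 1 ≤ t → ∀ i (s : ι → A) (a : A), ¬(s = (fun _ => pC) ∧ a = pC) →
      Q t i s a = Q (T + 1) i s a) ∧
    (∀ t, T + 1 ≤ t → ∀ i,
      Q t i (fun _ => pC) pC =
        (∏ k ∈ Finset.Ico (T + 1) t, (1 - α k * (1 - δ i))) *
            Q (T + 1) i (fun _ => pC) pC +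
          ∑ k ∈ Finset.Ico (T + 1) t,
            (∏ l ∈ Finset.Ico (k + 1) t, (1 - α l * (1 - δ i))) * α k * π i (fun _ => pC)) := by
  classical
  set pCp : ι → A := fun _ => pC with hpCp
  have hsup : ∀ t i (s : ι → A), (∀ a, a ≠ pC → Q t i s a < Q t i s pC) →
      Finset.univ.sup' Finset.univ_nonempty (Q t i s) = Q t i s pC := by
    intro t i s h
    refine le_antisymm (Finset.sup'_le _ _ fun a _ => ?_) (Finset.le_sup' _ (Finset.mem_univ pC))
    by_cases ha : a = pC
    · subst ha; exact le_rfl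
    · exact (h a ha).le
  have hpmax : ∀ t, T ≤ t → ∀ i, (∀ a, a ≠ pC → Q t i (st t) a < Q t i (st t) pC) →
      p t i = pC := by
    intro t ht i h
    by_contra hne
    exact absurd (hargmax t ht i pC) (not_le.2 (h _ hne))
  have hiT : ∀ i a, a ≠ pC → Q T i (st T) a < Q T i (st T) pC := by
    intro i a ha; rw [hst]; exact (hi i a ha).1
  have hpT : ∀ i, p T i = pC := fun i => hpmax T le_rfl i (hiT i)
  have hpTf : p T = pCp := funext hpT
  have hiC : ∀ i a, a ≠ pC → Q T i pCp a < Q T i pCp pC := fun i a ha => (hi i a ha).2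
  have hsupT : ∀ i, Finset.univ.sup' Finset.univ_nonempty (Q T i pCp) = Q T i pCp pC :=
    fun i => hsup T i pCp (hiC i)
  have hQT1 : ∀ i (s : ι → A) (a : A),
      Q (T + 1) i s a =
        if s = pT1 ∧ a = pC then
          (1 - α T) * Q T i pT1 pC + α T * (π i pCp + δ i * Q T i pCp pC)
        else Q T i s a := by
    intro i s a
    rw [hupd T le_rfl i s a, hst, hpTf, hsupT]
  have hQT1ne : ∀ i (s : ι → A) (a : A), ¬(s = pT1 ∧ a = pC) →
      Q (T + 1) i s a = Q T i s a := by
    intro i s a h; rw [hQT1, if_neg h]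
  have hQT1gt : ∀ i a, a ≠ pC → Q T i pCp a < Q (T + 1) i pCp pC := by
    intro i a ha
    rw [hQT1]
    by_cases hc : pCp = pT1
    · rw [if_pos ⟨hc, rfl⟩, ← hc]
      have h1 := hα T le_rfl
      have h2 := hδ i
      have h3 := hii i a ha
      have h4 := hiC i a ha
      have e1 : 0 ≤ α T * (π i pCp - (1 - δ i) * Q T i pCp a) :=
        mul_nonneg h1.1.le (by linarith)
      have e2 : 0 < (1 - α T + α T * δ i) * (Q T i pCp pC - Q T i pCp a) :=
        mul_pos (by nlinarith) (by linarith)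
      nlinarith [e1, e2]
    · rw [if_neg (by simp [hc])]
      exact hiC i a ha
  have key : ∀ t, T + 1 ≤ t →
      (∀ i (s : ι → A) (a : A), ¬(s = pCp ∧ a = pC) → Q t i s a = Q (T + 1) i s a) ∧
      (∀ i a, a ≠ pC → Q T i pCp a < Q t i pCp pC) ∧
      st t = pCp ∧
      (∀ i, Q t i pCp pC =
        (∏ k ∈ Finset.Ico (T + 1) t, (1 - α k * (1 - δ i))) * Q (T + 1) i pCp pC +
          ∑ k ∈ Finset.Ico (T + 1) t,
            (∏ l ∈ Finset.Ico (k + 1) t, (1 - α l * (1 - δ i))) * α k * π i pCp) := by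
    intro t ht
    induction t, ht using Nat.le_induction with
    | base =>
      refine ⟨fun i s a _ => rfl, hQT1gt, ?_, ?_⟩
      · rw [hstep T le_rfl, hpTf]
      · intro i; simp
    | succ t ht IH =>
      obtain ⟨IH1, IH2, IH3, IH4⟩ := IH
      have htT : T ≤ t := Nat.le_of_succ_le ht
      have hQgt : ∀ i a, a ≠ pC → Q t i pCp a < Q t i pCp pC := by
        intro i a ha
        have h5 : Q t i pCp a = Q T i pCp a := by
          rw [IH1 i pCp a (by simp [ha]), hQT1ne i pCp a (by simp [ha])]
        rw [h5]; exact IH2 i a ha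
      have hpt : ∀ i, p t i = pC := by
        intro i
        apply hpmax t htT i
        intro a ha
        rw [IH3]; exact hQgt i a ha
      have hptf : p t = pCp := funext hpt
      have hsupt : ∀ i, Finset.univ.sup' Finset.univ_nonempty (Q t i pCp) = Q t i pCp pC :=
        fun i => hsup t i pCp (hQgt i)
      have hQs : ∀ i (s : ι → A) (a : A),
          Q (t + 1) i s a = if s = pCp ∧ a = pC then
            (1 - α t) * Q t i pCp pC + α t * (π i pCp + δ i * Q t i pCp pC)
          else Q t i s a := by
        intro i s a
        rw [hupd t htT i s a, IH3, hptf, hsupt]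
      have hrec : ∀ i, Q (t + 1) i pCp pC =
          (1 - α t * (1 - δ i)) * Q t i pCp pC + α t * π i pCp := by
        intro i; rw [hQs, if_pos ⟨rfl, rfl⟩]; ring
      refine ⟨?_, ?_, ?_, ?_⟩
      · intro i s a h
        rw [hQs, if_neg h, IH1 i s a h]
      · intro i a ha
        rw [hrec i]
        have h1 := hα t htT
        have h2 := hδ i
        have h3 := hii i a ha
        have h4 := IH2 i a ha
        have e0 : 0 < 1 - α t * (1 - δ i) := by nlinarith
        have e1 : 0 ≤ α t * (π i pCp - (1 - δ i) * Q T i pCp a) :=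
          mul_nonneg h1.1.le (by linarith)
        have e2 : 0 < (1 - α t * (1 - δ i)) * (Q t i pCp pC - Q T i pCp a) :=
          mul_pos e0 (by linarith)
        nlinarith [e1, e2]
      · rw [hstep t htT, hptf]
      · intro i
        have hsum : ∑ k ∈ Finset.Ico (T + 1) t,
            (∏ l ∈ Finset.Ico (k + 1) (t + 1), (1 - α l * (1 - δ i))) * α k * π i pCp
            = (1 - α t * (1 - δ i)) * ∑ k ∈ Finset.Ico (T + 1) t,
              (∏ l ∈ Finset.Ico (k + 1) t, (1 - α l * (1 - δ i))) * α k * π i pCp := by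
          rw [Finset.mul_sum]
          refine Finset.sum_congr rfl fun k hk => ?_
          have hk' : k + 1 ≤ t := (Finset.mem_Ico.1 hk).2
          rw [Finset.prod_Ico_succ_top hk']
          ring
        rw [hrec i, IH4 i, Finset.prod_Ico_succ_top ht, Finset.sum_Ico_succ_top ht, hsum]
        simp [Finset.Ico_self]
        ring
  refine ⟨?_, ?_, hQT1, fun t ht i s a h => (key t ht).1 i s a h,
    fun t ht i => (key t ht).2.2.2 i⟩
  · intro t ht i
    rcases eq_or_lt_of_le ht with h | h
    · exact h ▸ hpT i
    · have ht1 : T + 1 ≤ t := h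
      obtain ⟨K1, K2, K3, _⟩ := key t ht1
      apply hpmax t ht i
      intro a ha
      rw [K3]
      have h5 : Q t i pCp a = Q T i pCp a := by
        rw [K1 i pCp a (by simp [ha]), hQT1ne i pCp a (by simp [ha])]
      rw [h5]; exact K2 i a ha
  · intro t ht i a ha
    rcases eq_or_lt_of_le ht with h | h
    · subst h; exact hiT i a ha
    · have ht1 : T + 1 ≤ t := h
      obtain ⟨K1, K2, K3, _⟩ := key t ht1
      rw [K3]
      have h5 : Q t i pCp a = Q T i pCp a := by
        rw [K1 i pCp a (by simp [ha]), hQT1ne i pCp a (by simp [ha])]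
      rw [h5]; exact K2 i a ha
end
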